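/- In an unambiguous NFA A with single final state, for any word w ∈ L(A) and any prefix decomposition w = u·a, the state reached after reading u in the (unique) accepting run is uniquely determined; hence in the shortest-path DAG of G×, backtracking from (v', q_F) yields runs of A that are the unique accepting runs on the corresponding path labels (no duplicate paths arise from run ambiguity). -/

import Mathlib

/-- A graph database: edges with source, target, and label. -/
structure GraphDB (V E S : Type) where
  src : E → V
  tgt : E → V
  lab : E → S

/-- An NFA with transition relation `δ ⊆ Q × Σ × Q`, initial state `q0`, final states `F`. -/
structure NFAx (Q S : Type) where
  δ : Set (Q × S × Q)
  q0 : Q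
  F : Set Q

/-- `A.Run q w q'`: the automaton can read word `w` going from state `q` to state `q'`. -/
inductive NFAx.Run {Q S : Type} (A : NFAx Q S) : Q → List S → Q → Prop
  | nil (q : Q) : A.Run q [] q
  | cons {q q' q'' : Q} {a : S} {w : List S} :
      (q, a, q') ∈ A.δ → A.Run q' w q'' → A.Run q (a :: w) q''

/-- The language accepted by the NFA. -/
def NFAx.Lang {Q S : Type} (A : NFAx Q S) : Set (List S) :=
  {w | ∃ qf ∈ A.F, A.Run A.q0 w qf}

/-- `G.IsWalk v es w`: the edge list `es` forms a walk from `v` to `w` in `G`. -/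
def GraphDB.IsWalk {V E S : Type} (G : GraphDB V E S) : V → List E → V → Prop
  | v, [], w => v = w
  | v, e :: es, w => G.src e = v ∧ G.IsWalk (G.tgt e) es w

/-- Distance (minimum number of edges over all walks), `⊤` if unreachable. -/
noncomputable def GraphDB.dist {V E S : Type} (G : GraphDB V E S) (v w : V) : ℕ∞ :=
  sInf {n : ℕ∞ | ∃ es : List E, G.IsWalk v es w ∧ (es.length : ℕ∞) = n}

/-- Edges of the product graph: pairs of a `G`-edge and a compatible transition. -/
def ProdE {V E Q S : Type} (G : GraphDB V E S) (A : NFAx Q S) : Type :=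
  {p : E × Q × S × Q // p.2 ∈ A.δ ∧ G.lab p.1 = p.2.2.1}

/-- The product graph `G×` of a graph database `G` and an NFA `A`. -/
def ProdGraph {V E Q S : Type} (G : GraphDB V E S) (A : NFAx Q S) :
    GraphDB (V × Q) (ProdE G A) S where
  src p := (G.src p.1.1, p.1.2.1)
  tgt p := (G.tgt p.1.1, p.1.2.2.2)
  lab p := G.lab p.1.1

/-- Projection of a product-graph edge to the underlying `G`-edge. -/
def projE {V E Q S : Type} {G : GraphDB V E S} {A : NFAx Q S} (p : ProdE G A) : E := p.1.1

/-- `A.RunStates q w qs qf`: `qs` is the full state sequence of a run on `w` from `q` to `qf`. -/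
inductive NFAx.RunStates {Q S : Type} (A : NFAx Q S) : Q → List S → List Q → Q → Prop
  | nil (q : Q) : A.RunStates q [] [q] q
  | cons {q q' qf : Q} {a : S} {w : List S} {qs : List Q} :
      (q, a, q') ∈ A.δ → A.RunStates q' w qs qf → A.RunStates q (a :: w) (q :: qs) qf

/-- `A` is unambiguous: every accepted word has exactly one accepting run (state sequence). -/
def NFAx.Unambiguous {Q S : Type} (A : NFAx Q S) : Prop :=
  ∀ (w : List S) (qs₁ qs₂ : List Q) (q₁ q₂ : Q), q₁ ∈ A.F → q₂ ∈ A.F →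
    A.RunStates A.q0 w qs₁ q₁ → A.RunStates A.q0 w qs₂ q₂ → qs₁ = qs₂

/-
Runs `q₀ →u q₁ →r q_F` and `q₀ →u q₂ →r q_F` glue to two accepting runs on `u ++ r` whose state
sequences carry `q₁`, resp. `q₂`, at position `|u|`; unambiguity makes the sequences, hence these
states, equal. A walk in `G×` from `(v, q₀)` to `(v', q_F)` is an accepting run on the label word of
its projection, and a product edge is determined by its `G`-edge and its two states; so two such
walks with the same projection read the same word, follow the same run, and coincide.
-/

namespace NFAx

variable {Q S : Type} {A : NFAx Q S}

theorem Run.exists_runStates {q q' : Q} {w : List S} (h : A.Run q w q') :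
    ∃ qs, A.RunStates q w qs q' := by
  induction h with
  | nil q => exact ⟨[q], .nil q⟩
  | cons hδ _ ih =>
    obtain ⟨qs, hqs⟩ := ih
    exact ⟨_, .cons hδ hqs⟩

theorem RunStates.length_eq {q q' : Q} {w : List S} {qs : List Q}
    (h : A.RunStates q w qs q') : qs.length = w.length + 1 := by
  induction h with
  | nil => rfl
  | cons _ _ ih => simp [ih]

theorem RunStates.exists_eq_cons {q q' : Q} {w : List S} {qs : List Q}
    (h : A.RunStates q w qs q') : ∃ qs', qs = q :: qs' := by
  cases h with
  | nil => exact ⟨[], rfl⟩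
  | cons => exact ⟨_, rfl⟩

theorem RunStates.append {q q' q'' : Q} {u r : List S} {qs qs' : List Q}
    (h : A.RunStates q u qs q') (h' : A.RunStates q' r qs' q'') :
    A.RunStates q (u ++ r) (qs.dropLast ++ qs') q'' := by
  induction h with
  | nil => simpa using h'
  | cons hδ hrun ih =>
    obtain ⟨_, rfl⟩ := hrun.exists_eq_cons
    exact .cons hδ (ih h')

theorem Unambiguous.eq_of_run_append {u r : List S} {q₁ q₂ f₁ f₂ : Q} (hU : A.Unambiguous)
    (hf₁ : f₁ ∈ A.F) (hf₂ : f₂ ∈ A.F) (h₁ : A.Run A.q0 u q₁) (h₁' : A.Run q₁ r f₁)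
    (h₂ : A.Run A.q0 u q₂) (h₂' : A.Run q₂ r f₂) : q₁ = q₂ := by
  obtain ⟨qs₁, hqs₁⟩ := h₁.exists_runStates
  obtain ⟨qs₂, hqs₂⟩ := h₂.exists_runStates
  obtain ⟨qs₁', hqs₁'⟩ := h₁'.exists_runStates
  obtain ⟨qs₂', hqs₂'⟩ := h₂'.exists_runStates
  have hrun := hU _ _ _ _ _ hf₁ hf₂ (hqs₁.append hqs₁') (hqs₂.append hqs₂')
  have hlen : qs₁.dropLast.length = qs₂.dropLast.length := by
    simp [hqs₁.length_eq, hqs₂.length_eq]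
  obtain ⟨t₁, rfl⟩ := hqs₁'.exists_eq_cons
  obtain ⟨t₂, rfl⟩ := hqs₂'.exists_eq_cons
  exact (List.cons.inj (List.append_inj hrun hlen).2).1

end NFAx

section ProdGraph

variable {V E Q S : Type} {G : GraphDB V E S} {A : NFAx Q S}

theorem ProdE.ext_of_projE {p₁ p₂ : ProdE G A} (he : projE p₁ = projE p₂)
    (hs : p₁.1.2.1 = p₂.1.2.1) (ht : p₁.1.2.2.2 = p₂.1.2.2.2) : p₁ = p₂ :=
  have hlab : p₁.1.2.2.1 = p₂.1.2.2.1 := p₁.2.2.symm.trans ((congrArg G.lab he).trans p₂.2.2)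
  Subtype.ext <| Prod.ext he <| Prod.ext hs <| Prod.ext hlab ht

theorem GraphDB.IsWalk.prodGraph_runStates {es : List (ProdE G A)} {v v' : V} {q q' : Q}
    (h : (ProdGraph G A).IsWalk (v, q) es (v', q')) :
    A.RunStates q (es.map (G.lab ∘ projE)) (q :: es.map fun p => p.1.2.2.2) q' := by
  induction es generalizing v q with
  | nil =>
    obtain ⟨-, rfl⟩ := Prod.mk.inj (h : (v, q) = (v', q'))
    exact .nil q
  | cons p es ih =>
    obtain ⟨⟨e, qs, a, qt⟩, hδ, hlab⟩ := p
    obtain ⟨hsrc, hwalk⟩ := h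
    obtain ⟨-, rfl⟩ := Prod.mk.inj hsrc
    refine .cons ?_ (ih hwalk)
    change (qs, G.lab e, qt) ∈ A.δ
    rwa [show G.lab e = a from hlab]

theorem GraphDB.IsWalk.prodGraph_eq_of_map_eq {es₁ es₂ : List (ProdE G A)} {v₁ v₂ : V} {q : Q}
    {x₁ x₂ : V × Q} (h₁ : (ProdGraph G A).IsWalk (v₁, q) es₁ x₁)
    (h₂ : (ProdGraph G A).IsWalk (v₂, q) es₂ x₂) (he : es₁.map projE = es₂.map projE)
    (ht : es₁.map (fun p => p.1.2.2.2) = es₂.map fun p => p.1.2.2.2) : es₁ = es₂ := by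
  induction es₁ generalizing es₂ v₁ v₂ q with
  | nil => exact (List.map_eq_nil_iff.mp he.symm).symm
  | cons p₁ es₁ ih =>
    obtain _ | ⟨p₂, es₂⟩ := es₂
    · simp at he
    obtain ⟨he, he'⟩ := List.cons.inj he
    obtain ⟨ht, ht'⟩ := List.cons.inj ht
    obtain ⟨hsrc₁, h₁⟩ := h₁
    obtain ⟨hsrc₂, h₂⟩ := h₂
    have hs : p₁.1.2.1 = p₂.1.2.1 := (Prod.mk.inj hsrc₁).2.trans (Prod.mk.inj hsrc₂).2.symm
    have hp := ProdE.ext_of_projE he hs ht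
    subst hp
    exact congrArg _ (ih h₁ h₂ he' ht')

end ProdGraph

/-- for an unambiguous NFA with single final state, the state reached after
reading any prefix of an accepted word in the accepting run is uniquely determined; hence
distinct `G×`-paths to `(v', q_F)` project to distinct `G`-paths (no duplicates from run
ambiguity in the backtracking). -/
theorem unambiguous_prefix_state_unique_and_proj_injective {V E Q S : Type}
    (G : GraphDB V E S) (A : NFAx Q S) (qF : Q) (hF : A.F = {qF}) (hU : A.Unambiguous)
    (v v' : V) :
    (∀ (u rest : List S) (q₁ q₂ : Q),
      A.Run A.q0 u q₁ → A.Run q₁ rest qF → A.Run A.q0 u q₂ → A.Run q₂ rest qF → q₁ = q₂) ∧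
    (∀ es₁ es₂ : List (ProdE G A),
      (ProdGraph G A).IsWalk (v, A.q0) es₁ (v', qF) →
      (ProdGraph G A).IsWalk (v, A.q0) es₂ (v', qF) →
      es₁.map projE = es₂.map projE → es₁ = es₂) := by
  have hqF : qF ∈ A.F := hF ▸ rfl
  refine ⟨fun u rest q₁ q₂ ↦ hU.eq_of_run_append hqF hqF, fun es₁ es₂ h₁ h₂ he ↦ ?_⟩
  have hword : es₁.map (G.lab ∘ projE) = es₂.map (G.lab ∘ projE) := by
    simp only [← List.map_map, he]
  have hrun₁ := h₁.prodGraph_runStates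
  rw [hword] at hrun₁
  have hstates := hU _ _ _ _ _ hqF hqF hrun₁ h₂.prodGraph_runStates
  exact h₁.prodGraph_eq_of_map_eq h₂ he (List.cons.inj hstates).2
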